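/- Let P, Q be lattice polytopes in ℝ² and let u ∈ ℤ² be a primitive vector. Suppose w_u(P) and w_u(Q) are not both zero, and let d = gcd(w_u(P), w_u(Q)). Then either V(P,Q) = 0 or V(P,Q) ≥ min{ d, w_u(P)/d, w_u(Q)/d }. -/

import Mathlib

open MeasureTheory Pointwise

/-- Normalized mixed area of two compact convex sets in ℝ². -/
noncomputable def mixedArea (P Q : Set (ℝ × ℝ)) : ℝ :=
  (volume (P + Q)).toReal - (volume P).toReal - (volume Q).toReal

/-- Embedding of ℤ² into ℝ². -/
def latticeEmbed (p : ℤ × ℤ) : ℝ × ℝ := ((p.1 : ℝ), (p.2 : ℝ))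

/-- A lattice polytope in ℝ² is the convex hull of a finite nonempty set of lattice points. -/
def IsLatticePolytope (P : Set (ℝ × ℝ)) : Prop :=
  ∃ S : Finset (ℤ × ℤ), S.Nonempty ∧ P = convexHull ℝ (latticeEmbed '' (S : Set (ℤ × ℤ)))

/-- The (lattice) width of a set `K ⊆ ℝ²` in the direction `u ∈ ℤ²`. -/
noncomputable def latticeWidth (u : ℤ × ℤ) (K : Set (ℝ × ℝ)) : ℝ :=
  sSup ((fun x : ℝ × ℝ => x.1 * u.1 + x.2 * u.2) '' K) -
    sInf ((fun x : ℝ × ℝ => x.1 * u.1 + x.2 * u.2) '' K)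

/-!
For `p, p' ∈ P` and `q, q' ∈ Q` one has `V(P, Q) ≥ |det (p' - p, q' - q)|`. After a
volume-preserving linear map making `q' - q` vertical of length `β`, the sum `P + Q` contains three
pieces with disjoint shadows on the first axis: the part of `Q` left of `q` translated by a
leftmost point of `P`, the thickening `q + P + {0} × [0, β]`, and the part of `Q` right of `q`
translated by a rightmost point of `P`. By Cavalieri the middle piece has area at least
`vol P + β |p'.1 - p.1|`.

Let `a = p' - p` and `b = q' - q` realise the widths: `⟨u, a⟩ = w₁`, `⟨u, b⟩ = w₂`. The identity
`w₁ b - w₂ a = det (a, b) (-u₂, u₁)` and primitivity of `u` give `d ∣ det (a, b)`, so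
`det (a, b) ≠ 0` forces `V ≥ d`. If `det (a, b) = 0`, then `a = (w₁/d) c` and `b = (w₂/d) c` for a
lattice vector `c`. A lattice point of `P` off the line through `p` in direction `c` gives a
determinant against `b` that is a nonzero multiple of `w₂/d`, symmetrically for `Q`; if there is
none, `P` and `Q` lie on parallel lines and `V = 0`.
-/

namespace Plane

variable {R : Type*} [CommRing R]

-- Same form as the functional in `latticeWidth`, so that `latticeWidth u K` is definitionally
-- `sSup (dot (latticeEmbed u) '' K) - sInf (dot (latticeEmbed u) '' K)`.
def dot (u : R × R) : R × R →ₗ[R] R where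
  toFun x := x.1 * u.1 + x.2 * u.2
  map_add' x y := by simp only [Prod.fst_add, Prod.snd_add]; ring
  map_smul' c x := by simp only [Prod.smul_fst, Prod.smul_snd, smul_eq_mul, RingHom.id_apply]; ring

@[simp]
theorem dot_apply (u x : R × R) : dot u x = x.1 * u.1 + x.2 * u.2 := rfl

def cross (x y : R × R) : R := x.1 * y.2 - x.2 * y.1

theorem cross_smul_right (x y : R × R) (r : R) : cross x (r • y) = r * cross x y := by
  simp only [cross, Prod.smul_fst, Prod.smul_snd, smul_eq_mul]; ring

theorem cross_smul_left (x y : R × R) (r : R) : cross (r • x) y = r * cross x y := by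
  simp only [cross, Prod.smul_fst, Prod.smul_snd, smul_eq_mul]; ring

theorem dot_ne_zero {u : R × R} (hu : u ≠ 0) : dot u ≠ 0 := fun h =>
  hu (Prod.ext (by simpa using LinearMap.congr_fun h (1, 0))
    (by simpa using LinearMap.congr_fun h (0, 1)))

theorem cross_anticomm (x y : R × R) : -cross x y = cross y x := by
  simp only [cross]; ring

theorem dot_perp (x y : R × R) : dot (y.2, -y.1) x = cross x y := by
  simp only [dot_apply, cross]; ring

theorem dot_smul_sub_dot_smul (u a b : R × R) :
    dot u a • b - dot u b • a = cross a b • (-u.2, u.1) := by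
  ext <;> simp only [dot_apply, cross, Prod.fst_sub, Prod.snd_sub, Prod.smul_fst, Prod.smul_snd,
    smul_eq_mul] <;> ring

end Plane

open Plane Set

theorem volume_add_ofReal_le_volume_add_Icc {s : Set ℝ} (hne : s.Nonempty) (hbdd : BddAbove s)
    {β : ℝ} (hβ : 0 ≤ β) : volume s + ENNReal.ofReal β ≤ volume (s + Icc 0 β) := by
  have hdisj : Disjoint s (Ioo (sSup s) (sSup s + β)) :=
    disjoint_left.2 fun x hx hx' => (le_csSup hbdd hx).not_gt hx'.1
  have hsub : s ∪ Ioo (sSup s) (sSup s + β) ⊆ s + Icc 0 β := by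
    rintro y (hy | hy)
    · exact ⟨y, hy, 0, left_mem_Icc.2 hβ, add_zero y⟩
    · obtain ⟨x, hx, hxy⟩ := exists_lt_of_lt_csSup hne (show y - β < sSup s by linarith [hy.2])
      exact ⟨x, hx, y - x, ⟨by linarith [le_csSup hbdd hx, hy.1], by linarith⟩, by ring⟩
  calc volume s + ENNReal.ofReal β = volume (s ∪ Ioo (sSup s) (sSup s + β)) := by
        rw [measure_union hdisj measurableSet_Ioo, Real.volume_Ioo, add_sub_cancel_left]
    _ ≤ _ := measure_mono hsub

theorem addHaar_preimage_singleton_eq_zero {E : Type*} [NormedAddCommGroup E] [NormedSpace ℝ E]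
    [MeasurableSpace E] [BorelSpace E] [FiniteDimensional ℝ E] (μ : Measure E)
    [μ.IsAddHaarMeasure] {f : E →ₗ[ℝ] ℝ} (hf : f ≠ 0) (r : ℝ) : μ (f ⁻¹' {r}) = 0 := by
  rcases (f ⁻¹' {r}).eq_empty_or_nonempty with h | ⟨p, hp⟩
  · rw [h, measure_empty]
  have : f ⁻¹' {r} = (fun x => -p + x) ⁻¹' (LinearMap.ker f : Set E) := by
    ext x
    simp_all [sub_eq_zero, neg_add_eq_sub]
  rw [this, measure_preimage_add]
  exact Measure.addHaar_submodule μ _ (by rwa [Ne, LinearMap.ker_eq_top])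

theorem volume_le_volume_inter_add_volume_inter (S : Set (ℝ × ℝ)) (c : ℝ) :
    volume S ≤ volume (S ∩ {z | z.1 < c}) + volume (S ∩ {z | c < z.1}) := by
  have hline : volume (LinearMap.fst ℝ ℝ ℝ ⁻¹' {c}) = 0 := addHaar_preimage_singleton_eq_zero
    volume (fun h => by simpa using LinearMap.congr_fun h (1, 0)) c
  calc volume S
      ≤ volume ((S ∩ {z | z.1 < c}) ∪ (S ∩ {z | c < z.1}) ∪ LinearMap.fst ℝ ℝ ℝ ⁻¹' {c}) := by
        refine measure_mono fun z hz => ?_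
        rcases lt_trichotomy z.1 c with h | h | h
        · exact Or.inl (Or.inl ⟨hz, h⟩)
        · exact Or.inr h
        · exact Or.inl (Or.inr ⟨hz, h⟩)
    _ ≤ _ := (measure_union_le _ _).trans (by rw [hline, add_zero]; exact measure_union_le _ _)

theorem volume_add_mul_volume_image_fst_le {P : Set (ℝ × ℝ)} (hP : IsCompact P) {β : ℝ}
    (hβ : 0 ≤ β) :
    volume P + ENNReal.ofReal β * volume (Prod.fst '' P) ≤ volume (P + {0} ×ˢ Icc 0 β) := by
  have hPm := hP.isClosed.measurableSet
  have hPVm : MeasurableSet (P + {0} ×ˢ Icc 0 β) :=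
    (hP.add (isCompact_singleton.prod isCompact_Icc)).isClosed.measurableSet
  have hfst := (hP.image continuous_fst).isClosed.measurableSet
  rw [Measure.volume_eq_prod, Measure.prod_apply hPm, Measure.prod_apply hPVm,
    ← lintegral_indicator_const hfst, ← lintegral_add_left (measurable_measure_prodMk_left hPm)]
  refine lintegral_mono fun x => ?_
  have hslice : Prod.mk x ⁻¹' P + Icc 0 β ⊆ Prod.mk x ⁻¹' (P + {0} ×ˢ Icc 0 β) := by
    rintro _ ⟨y, hy, t, ht, rfl⟩
    exact ⟨(x, y), hy, (0, t), ⟨rfl, ht⟩, by simp⟩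
  by_cases hx : x ∈ Prod.fst '' P
  · rw [indicator_of_mem hx]
    obtain ⟨z, hz, rfl⟩ := hx
    refine (volume_add_ofReal_le_volume_add_Icc ⟨z.2, hz⟩ ?_ hβ).trans (measure_mono hslice)
    refine (hP.image continuous_snd).bddAbove.mono ?_
    exact fun y hy => ⟨_, hy, rfl⟩
  · rw [indicator_of_notMem hx, add_zero]
    exact measure_mono fun y hy => hslice (add_zero y ▸ add_mem_add hy (left_mem_Icc.2 hβ))

theorem Convex.add_mem_of_vertical {Q : Set (ℝ × ℝ)} (hQc : Convex ℝ Q) {q : ℝ × ℝ} (hq : q ∈ Q)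
    {β : ℝ} (hqβ : q + (0, β) ∈ Q) {v : ℝ × ℝ} (hv : v ∈ ({0} ×ˢ Icc 0 β : Set (ℝ × ℝ))) :
    q + v ∈ Q := by
  obtain ⟨hv₁ : v.1 = 0, hv₂⟩ := hv
  rcases (hv₂.1.trans hv₂.2).eq_or_lt with hβ | hβ
  · rw [← Prod.mk.eta (p := v), hv₁, le_antisymm (hβ ▸ hv₂.2) hv₂.1, Prod.mk_zero_zero, add_zero]
    exact hq
  · convert hQc.add_smul_mem hq hqβ (t := v.2 / β)
      ⟨div_nonneg hv₂.1 hβ.le, div_le_one_of_le₀ hv₂.2 hβ.le⟩ using 2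
    ext <;> simp [hv₁, div_mul_cancel₀ _ hβ.ne']

theorem volume_halves_add_volume_add_vertical_le {P Q : Set (ℝ × ℝ)} (hPk : IsCompact P)
    (hPne : P.Nonempty) (hQc : Convex ℝ Q) (hQk : IsCompact Q) {q : ℝ × ℝ} (hq : q ∈ Q) {β : ℝ}
    (hqβ : q + (0, β) ∈ Q) :
    volume (Q ∩ {z | z.1 < q.1}) + volume (P + {0} ×ˢ Icc 0 β) + volume (Q ∩ {z | q.1 < z.1}) ≤
      volume (P + Q) := by
  obtain ⟨l, hl, hlmin⟩ := hPk.exists_isMinOn hPne continuous_fst.continuousOn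
  obtain ⟨r, hr, hrmax⟩ := hPk.exists_isMaxOn hPne continuous_fst.continuousOn
  set A := l +ᵥ (Q ∩ {z | z.1 < q.1})
  set B := q +ᵥ (P + {0} ×ˢ Icc 0 β)
  set C := r +ᵥ (Q ∩ {z | q.1 < z.1})
  have hA : ∀ z ∈ A, z.1 < l.1 + q.1 := by
    rintro _ ⟨y, ⟨-, hy : y.1 < q.1⟩, rfl⟩
    simp only [vadd_eq_add, Prod.fst_add]
    linarith
  have hB : ∀ z ∈ B, l.1 + q.1 ≤ z.1 ∧ z.1 ≤ r.1 + q.1 := by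
    rintro _ ⟨_, ⟨x, hx, v, ⟨hv : v.1 = 0, -⟩, rfl⟩, rfl⟩
    simp only [vadd_eq_add, Prod.fst_add, hv]
    constructor <;> linarith [isMinOn_iff.1 hlmin x hx, isMaxOn_iff.1 hrmax x hx]
  have hC : ∀ z ∈ C, r.1 + q.1 < z.1 := by
    rintro _ ⟨y, ⟨-, hy : q.1 < y.1⟩, rfl⟩
    simp only [vadd_eq_add, Prod.fst_add]
    linarith
  have hAB : Disjoint A B := disjoint_left.2 fun z hzA hzB => (hA z hzA).not_ge (hB z hzB).1
  have hABC : Disjoint (A ∪ B) C := by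
    refine disjoint_left.2 fun z hz hzC => ?_
    rcases hz with hzA | hzB
    · linarith [hA z hzA, hC z hzC, isMinOn_iff.1 hlmin r hr]
    · linarith [(hB z hzB).2, hC z hzC]
  have hsub : A ∪ B ∪ C ⊆ P + Q := by
    rintro _ ((⟨y, ⟨hy, -⟩, rfl⟩ | ⟨_, ⟨x, hx, v, hv, rfl⟩, rfl⟩) | ⟨y, ⟨hy, -⟩, rfl⟩)
    · exact add_mem_add hl hy
    · exact ⟨x, hx, q + v, hQc.add_mem_of_vertical hq hqβ hv, add_left_comm x q v⟩
    · exact add_mem_add hr hy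
  have hBm : MeasurableSet B :=
    (hPk.add (isCompact_singleton.prod isCompact_Icc)).isClosed.measurableSet.const_vadd q
  have hCm : MeasurableSet C := (hQk.isClosed.measurableSet.inter
    (measurableSet_lt measurable_const measurable_fst)).const_vadd r
  calc _ = volume A + volume B + volume C := by rw [measure_vadd, measure_vadd, measure_vadd]
    _ = volume (A ∪ B ∪ C) := by rw [measure_union hABC hCm, measure_union hAB hBm]
    _ ≤ volume (P + Q) := measure_mono hsub

theorem volume_add_volume_add_le_of_vertical {P Q : Set (ℝ × ℝ)} (hPc : Convex ℝ P)
    (hPk : IsCompact P) (hQc : Convex ℝ Q) (hQk : IsCompact Q) {p p' q : ℝ × ℝ} (hp : p ∈ P)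
    (hp' : p' ∈ P) (hq : q ∈ Q) {β : ℝ} (hβ : 0 ≤ β) (hqβ : q + (0, β) ∈ Q) :
    volume P + volume Q + ENNReal.ofReal (|p'.1 - p.1| * β) ≤ volume (P + Q) := by
  have hshadow : ENNReal.ofReal (|p'.1 - p.1| * β) ≤ ENNReal.ofReal β * volume (Prod.fst '' P) := by
    rw [ENNReal.ofReal_mul (abs_nonneg _), mul_comm, ← Real.volume_interval]
    gcongr
    exact (hPc.linear_image (LinearMap.fst ℝ ℝ ℝ)).ordConnected.uIcc_subset ⟨p, hp, rfl⟩
      ⟨p', hp', rfl⟩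
  calc volume P + volume Q + ENNReal.ofReal (|p'.1 - p.1| * β)
      ≤ volume P + (volume (Q ∩ {z | z.1 < q.1}) + volume (Q ∩ {z | q.1 < z.1}))
          + ENNReal.ofReal β * volume (Prod.fst '' P) := by
        gcongr
        exact volume_le_volume_inter_add_volume_inter Q q.1
    _ = volume (Q ∩ {z | z.1 < q.1}) + (volume P + ENNReal.ofReal β * volume (Prod.fst '' P))
          + volume (Q ∩ {z | q.1 < z.1}) := by ring
    _ ≤ volume (Q ∩ {z | z.1 < q.1}) + volume (P + {0} ×ˢ Icc 0 β)
          + volume (Q ∩ {z | q.1 < z.1}) := by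
        gcongr
        exact volume_add_mul_volume_image_fst_le hPk hβ
    _ ≤ volume (P + Q) := volume_halves_add_volume_add_vertical_le hPk ⟨p, hp⟩ hQc hQk hq hqβ

theorem exists_linearMap_map_eq_vertical {b : ℝ × ℝ} (hb : b ≠ 0) :
    ∃ T : ℝ × ℝ →ₗ[ℝ] ℝ × ℝ, ∃ n > 0, (∀ S, volume (T '' S) = volume S) ∧ T b = (0, n) ∧
      ∀ x, (T x).1 * n = cross x b := by
  set n := b.1 ^ 2 + b.2 ^ 2
  have hn : 0 < n := by
    rcases eq_or_ne b.1 0 with h | h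
    · have : b.2 ≠ 0 := fun h' => hb (Prod.ext h h')
      positivity
    · positivity
  refine ⟨Matrix.toLin (Module.Basis.finTwoProd ℝ) (Module.Basis.finTwoProd ℝ)
    !![b.2 / n, -b.1 / n; b.1, b.2], n, hn, fun S => ?_, ?_, fun x => ?_⟩
  · rw [Measure.addHaar_image_linearMap, LinearMap.det_toLin, Matrix.det_fin_two_of,
      show b.2 / n * b.2 - -b.1 / n * b.1 = 1 by field_simp; ring]
    simp
  · rw [Matrix.toLin_finTwoProd_apply]
    ext <;> simp only [n] <;> ring
  · rw [Matrix.toLin_finTwoProd_apply, cross]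
    field_simp
    ring

theorem volume_add_volume_add_abs_cross_le {P Q : Set (ℝ × ℝ)} (hPc : Convex ℝ P)
    (hPk : IsCompact P) (hQc : Convex ℝ Q) (hQk : IsCompact Q) {p p' q q' : ℝ × ℝ} (hp : p ∈ P)
    (hp' : p' ∈ P) (hq : q ∈ Q) (hq' : q' ∈ Q) :
    volume P + volume Q + ENNReal.ofReal |cross (p' - p) (q' - q)| ≤ volume (P + Q) := by
  rcases eq_or_ne (q' - q) 0 with hb | hb
  · simpa [hb, cross] using
      volume_add_volume_add_le_of_vertical hPc hPk hQc hQk hp hp hq le_rfl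
        (by rwa [Prod.mk_zero_zero, add_zero])
  obtain ⟨T, n, hn, hvol, hTb, hT⟩ := exists_linearMap_map_eq_vertical hb
  have hTc : Continuous T := T.continuous_of_finiteDimensional
  have h := volume_add_volume_add_le_of_vertical (hPc.linear_image T) (hPk.image hTc)
    (hQc.linear_image T) (hQk.image hTc) (mem_image_of_mem T hp) (mem_image_of_mem T hp')
    (mem_image_of_mem T hq) hn.le ⟨q', hq', by rw [← hTb, ← map_add, add_sub_cancel]⟩
  have hcross : |(T p').1 - (T p).1| * n = |cross (p' - p) (q' - q)| := by
    rw [← Prod.fst_sub, ← map_sub, ← hT, abs_mul, abs_of_pos hn]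
  rwa [hvol, hvol, ← Set.image_add, hvol, hcross] at h

theorem abs_cross_le_mixedArea {P Q : Set (ℝ × ℝ)} (hPc : Convex ℝ P) (hPk : IsCompact P)
    (hQc : Convex ℝ Q) (hQk : IsCompact Q) {p p' q q' : ℝ × ℝ} (hp : p ∈ P) (hp' : p' ∈ P)
    (hq : q ∈ Q) (hq' : q' ∈ Q) : |cross (p' - p) (q' - q)| ≤ mixedArea P Q := by
  have hPf : volume P ≠ ⊤ := hPk.measure_lt_top.ne
  have hQf : volume Q ≠ ⊤ := hQk.measure_lt_top.ne
  have h := ENNReal.toReal_mono (hPk.add hQk).measure_lt_top.ne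
    (volume_add_volume_add_abs_cross_le hPc hPk hQc hQk hp hp' hq hq')
  rw [ENNReal.toReal_add (ENNReal.add_ne_top.2 ⟨hPf, hQf⟩) ENNReal.ofReal_ne_top,
    ENNReal.toReal_add hPf hQf,
    ENNReal.toReal_ofReal (abs_nonneg _)] at h
  rw [mixedArea]
  linarith

theorem mixedArea_eq_zero_of_subset_preimage {P Q : Set (ℝ × ℝ)} {f : ℝ × ℝ →ₗ[ℝ] ℝ}
    (hf : f ≠ 0) {r s : ℝ} (hP : P ⊆ f ⁻¹' {r}) (hQ : Q ⊆ f ⁻¹' {s}) : mixedArea P Q = 0 := by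
  have hPQ : P + Q ⊆ f ⁻¹' {r + s} := by
    rintro _ ⟨x, hx, y, hy, rfl⟩
    simp_all [subset_def]
  have hnull (c : ℝ) : volume (f ⁻¹' {c}) = 0 := addHaar_preimage_singleton_eq_zero volume hf c
  simp [mixedArea, measure_mono_null hP (hnull r), measure_mono_null hQ (hnull s),
    measure_mono_null hPQ (hnull (r + s))]

theorem exists_eq_smul_of_smul_eq_smul {R M : Type*} [CommRing R] [AddCommGroup M] [Module R M]
    {m n : R} (hmn : IsCoprime m n) {a b : M} (h : m • b = n • a) :
    ∃ c, a = m • c ∧ b = n • c := by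
  obtain ⟨x, y, hxy⟩ := hmn
  exact ⟨x • a + y • b, by linear_combination (norm := module) -(hxy • a) - y • h,
    by linear_combination (norm := module) -(hxy • b) + x • h⟩

theorem gcd_dvd_cross {u : ℤ × ℤ} (hu : Int.gcd u.1 u.2 = 1) (a b : ℤ × ℤ) :
    (Int.gcd (dot u a) (dot u b) : ℤ) ∣ cross a b := by
  obtain ⟨x, y, hxy⟩ := Int.isCoprime_iff_gcd_eq_one.2 hu
  have hid := dot_smul_sub_dot_smul u a b
  have hg₁ : (Int.gcd (dot u a) (dot u b) : ℤ) ∣ dot u a := Int.gcd_dvd_left ..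
  have hg₂ : (Int.gcd (dot u a) (dot u b) : ℤ) ∣ dot u b := Int.gcd_dvd_right ..
  have h₁ : (Int.gcd (dot u a) (dot u b) : ℤ) ∣ cross a b * -u.2 := by
    have := congrArg Prod.fst hid
    simp only [Prod.fst_sub, Prod.smul_fst, smul_eq_mul] at this
    exact this ▸ dvd_sub (hg₁.mul_right _) (hg₂.mul_right _)
  have h₂ : (Int.gcd (dot u a) (dot u b) : ℤ) ∣ cross a b * u.1 := by
    have := congrArg Prod.snd hid
    simp only [Prod.snd_sub, Prod.smul_snd, smul_eq_mul] at this
    exact this ▸ dvd_sub (hg₁.mul_right _) (hg₂.mul_right _)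
  calc _ ∣ x * (cross a b * u.1) - y * (cross a b * -u.2) := dvd_sub (h₂.mul_left _) (h₁.mul_left _)
    _ = cross a b := by linear_combination cross a b * hxy

theorem exists_eq_smul_of_cross_eq_zero {u a b : ℤ × ℤ} {w₁ w₂ : ℕ} (hw₁ : dot u a = w₁)
    (hw₂ : dot u b = w₂) (hpos : 0 < w₁) (h : cross a b = 0) :
    ∃ c, a = ((w₁ / Nat.gcd w₁ w₂ : ℕ) : ℤ) • c ∧ b = ((w₂ / Nat.gcd w₁ w₂ : ℕ) : ℤ) • c := by
  have hD : 0 < Nat.gcd w₁ w₂ := Nat.gcd_pos_of_pos_left _ hpos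
  apply exists_eq_smul_of_smul_eq_smul
    (Nat.isCoprime_iff_coprime.2 (Nat.coprime_div_gcd_div_gcd hD))
  apply smul_right_injective (ℤ × ℤ) (Int.natCast_ne_zero.2 hD.ne')
  have := dot_smul_sub_dot_smul u a b
  rw [h, zero_smul, sub_eq_zero, hw₁, hw₂] at this
  simp only [smul_smul, ← Nat.cast_mul]
  rwa [Nat.mul_div_cancel' (Nat.gcd_dvd_left w₁ w₂), Nat.mul_div_cancel' (Nat.gcd_dvd_right w₁ w₂)]

theorem exists_min_le_natAbs_cross_or_parallel {S T : Finset (ℤ × ℤ)} {u : ℤ × ℤ}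
    (hu : Int.gcd u.1 u.2 = 1) {p p' q q' : ℤ × ℤ} (hp : p ∈ S) (hp' : p' ∈ S) (hq : q ∈ T)
    (hq' : q' ∈ T) {w₁ w₂ : ℕ} (hw₁ : dot u (p' - p) = w₁) (hw₂ : dot u (q' - q) = w₂) :
    (∃ x ∈ S, ∃ y ∈ S, ∃ z ∈ T, ∃ t ∈ T,
      min (Nat.gcd w₁ w₂) (min (w₁ / Nat.gcd w₁ w₂) (w₂ / Nat.gcd w₁ w₂)) ≤
        (cross (y - x) (t - z)).natAbs) ∨
    ∃ ν : ℤ × ℤ, ν ≠ 0 ∧ (∀ s ∈ S, dot ν s = dot ν p) ∧ ∀ t ∈ T, dot ν t = dot ν q := by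
  rcases Nat.eq_zero_or_pos w₁ with rfl | hpos
  · exact Or.inl ⟨p, hp, p, hp, q, hq, q, hq, by simp⟩
  by_cases hab : cross (p' - p) (q' - q) = 0
  swap
  · refine Or.inl ⟨p, hp, p', hp', q, hq, q', hq', (min_le_left _ _).trans ?_⟩
    refine Nat.le_of_dvd (Int.natAbs_pos.2 hab) (Int.natCast_dvd.1 ?_)
    simpa only [hw₁, hw₂, Int.gcd_natCast_natCast] using gcd_dvd_cross hu (p' - p) (q' - q)
  obtain ⟨c, ha, hb⟩ := exists_eq_smul_of_cross_eq_zero hw₁ hw₂ hpos hab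
  by_cases hS : ∃ s ∈ S, cross (s - p) c ≠ 0
  · obtain ⟨s, hs, hsc⟩ := hS
    refine Or.inl ⟨p, hp, s, hs, q, hq, q', hq', ?_⟩
    rw [hb, cross_smul_right, Int.natAbs_mul, Int.natAbs_natCast]
    exact (min_le_right _ _).trans ((min_le_right _ _).trans
      (Nat.le_mul_of_pos_right _ (Int.natAbs_pos.2 hsc)))
  by_cases hT : ∃ t ∈ T, cross c (t - q) ≠ 0
  · obtain ⟨t, ht, htc⟩ := hT
    refine Or.inl ⟨p, hp, p', hp', q, hq, t, ht, ?_⟩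
    rw [ha, cross_smul_left, Int.natAbs_mul, Int.natAbs_natCast]
    exact (min_le_right _ _).trans ((min_le_left _ _).trans
      (Nat.le_mul_of_pos_right _ (Int.natAbs_pos.2 htc)))
  push Not at hS hT
  have hc : c ≠ 0 := by
    rintro rfl
    rw [smul_zero] at ha
    rw [ha, map_zero] at hw₁
    omega
  refine Or.inr ⟨(c.2, -c.1), by simpa [Prod.ext_iff, and_comm] using hc, fun s hs => ?_,
    fun t ht => ?_⟩
  · rw [← sub_eq_zero, ← map_sub, dot_perp, hS s hs]
  · rw [← sub_eq_zero, ← map_sub, dot_perp, ← Plane.cross_anticomm, hT t ht, neg_zero]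

theorem latticeEmbed_eq_zero {x : ℤ × ℤ} : latticeEmbed x = 0 ↔ x = 0 := by
  simp [latticeEmbed, Prod.ext_iff]

theorem latticeEmbed_sub (x y : ℤ × ℤ) :
    latticeEmbed (x - y) = latticeEmbed x - latticeEmbed y := by
  simp [latticeEmbed]

theorem cross_latticeEmbed (x y : ℤ × ℤ) :
    cross (latticeEmbed x) (latticeEmbed y) = ((cross x y : ℤ) : ℝ) := by
  simp [cross, latticeEmbed]

theorem dot_latticeEmbed (u x : ℤ × ℤ) :
    dot (latticeEmbed u) (latticeEmbed x) = ((dot u x : ℤ) : ℝ) := by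
  simp [latticeEmbed]

theorem exists_latticeWidth_convexHull_eq {S : Finset (ℤ × ℤ)} (hS : S.Nonempty) (u : ℤ × ℤ) :
    ∃ p ∈ S, ∃ p' ∈ S,
      latticeWidth u (convexHull ℝ (latticeEmbed '' S)) = ((dot u (p' - p) : ℤ) : ℝ) := by
  obtain ⟨p, hp, hmin⟩ := S.exists_min_image (dot u) hS
  obtain ⟨p', hp', hmax⟩ := S.exists_max_image (dot u) hS
  refine ⟨p, hp, p', hp', ?_⟩
  set f := dot (latticeEmbed u)
  have hsup : IsGreatest (f '' convexHull ℝ (latticeEmbed '' S)) (dot u p') := by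
    refine ⟨⟨_, subset_convexHull ℝ _ ⟨p', hp', rfl⟩, dot_latticeEmbed u p'⟩, ?_⟩
    rintro _ ⟨x, hx, rfl⟩
    obtain ⟨_, ⟨s, hs, rfl⟩, hxs⟩ :=
      (f.convexOn convex_univ).exists_ge_of_mem_convexHull (subset_univ _) hx
    exact hxs.trans ((dot_latticeEmbed u s).trans_le (Int.cast_le.2 (hmax s hs)))
  have hinf : IsLeast (f '' convexHull ℝ (latticeEmbed '' S)) (dot u p) := by
    refine ⟨⟨_, subset_convexHull ℝ _ ⟨p, hp, rfl⟩, dot_latticeEmbed u p⟩, ?_⟩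
    rintro _ ⟨x, hx, rfl⟩
    obtain ⟨_, ⟨s, hs, rfl⟩, hxs⟩ :=
      (f.concaveOn convex_univ).exists_le_of_mem_convexHull (subset_univ _) hx
    exact (Int.cast_le.2 (hmin s hs)).trans ((dot_latticeEmbed u s).symm.trans_le hxs)
  show sSup (f '' _) - sInf (f '' _) = _
  rw [hsup.csSup_eq, hinf.csInf_eq, map_sub, Int.cast_sub]

theorem abs_cross_le_mixedArea_convexHull {S T : Finset (ℤ × ℤ)} {x y z t : ℤ × ℤ} (hx : x ∈ S)
    (hy : y ∈ S) (hz : z ∈ T) (ht : t ∈ T) :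
    |((cross (y - x) (t - z) : ℤ) : ℝ)| ≤
      mixedArea (convexHull ℝ (latticeEmbed '' S)) (convexHull ℝ (latticeEmbed '' T)) := by
  have hmem {S : Finset (ℤ × ℤ)} {s} (hs : s ∈ S) :
      latticeEmbed s ∈ convexHull ℝ (latticeEmbed '' S) :=
    subset_convexHull ℝ _ (mem_image_of_mem _ hs)
  have hcompact (S : Finset (ℤ × ℤ)) : IsCompact (convexHull ℝ (latticeEmbed '' S)) :=
    (S.finite_toSet.image latticeEmbed).isCompact_convexHull ℝ
  rw [← cross_latticeEmbed, latticeEmbed_sub, latticeEmbed_sub]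
  exact abs_cross_le_mixedArea (convex_convexHull ℝ _) (hcompact S) (convex_convexHull ℝ _)
    (hcompact T) (hmem hx) (hmem hy) (hmem hz) (hmem ht)

theorem convexHull_latticeEmbed_subset_preimage {S : Finset (ℤ × ℤ)} {ν : ℤ × ℤ} {r : ℤ}
    (h : ∀ s ∈ S, dot ν s = r) :
    convexHull ℝ (latticeEmbed '' S) ⊆ dot (latticeEmbed ν) ⁻¹' {(r : ℝ)} := by
  refine convexHull_min ?_ ((convex_singleton _).linear_preimage _)
  rintro _ ⟨s, hs, rfl⟩
  rw [mem_preimage, dot_latticeEmbed, h s hs, mem_singleton_iff]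

theorem mixedArea_gap_general (P Q : Set (ℝ × ℝ))
    (hP : IsLatticePolytope P) (hQ : IsLatticePolytope Q)
    (u : ℤ × ℤ) (hu : Int.gcd u.1 u.2 = 1)
    (w₁ w₂ : ℕ) (hw₁ : latticeWidth u P = (w₁ : ℝ)) (hw₂ : latticeWidth u Q = (w₂ : ℝ)) :
    mixedArea P Q = 0 ∨
      min ((Nat.gcd w₁ w₂ : ℝ))
        (min ((w₁ : ℝ) / (Nat.gcd w₁ w₂ : ℝ)) ((w₂ : ℝ) / (Nat.gcd w₁ w₂ : ℝ)))
        ≤ mixedArea P Q := by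
  obtain ⟨S, hS, rfl⟩ := hP
  obtain ⟨T, hT, rfl⟩ := hQ
  obtain ⟨p, hp, p', hp', hwP⟩ := exists_latticeWidth_convexHull_eq hS u
  obtain ⟨q, hq, q', hq', hwQ⟩ := exists_latticeWidth_convexHull_eq hT u
  rcases exists_min_le_natAbs_cross_or_parallel hu hp hp' hq hq' (w₁ := w₁) (w₂ := w₂)
    (by exact_mod_cast hwP.symm.trans hw₁) (by exact_mod_cast hwQ.symm.trans hw₂) with
    ⟨x, hx, y, hy, z, hz, t, ht, hle⟩ | ⟨ν, hν, hSν, hTν⟩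
  · right
    calc _ = ((min (Nat.gcd w₁ w₂) (min (w₁ / Nat.gcd w₁ w₂) (w₂ / Nat.gcd w₁ w₂)) : ℕ) : ℝ) := by
          push_cast [Nat.cast_div_charZero (Nat.gcd_dvd_left w₁ w₂),
            Nat.cast_div_charZero (Nat.gcd_dvd_right w₁ w₂)]
          rfl
      _ ≤ |((cross (y - x) (t - z) : ℤ) : ℝ)| := by
          rw [← Int.cast_abs, ← Nat.cast_natAbs]
          exact_mod_cast hle
      _ ≤ _ := abs_cross_le_mixedArea_convexHull hx hy hz ht
  · left
    exact mixedArea_eq_zero_of_subset_preimage (dot_ne_zero (latticeEmbed_eq_zero.not.2 hν))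
      (convexHull_latticeEmbed_subset_preimage hSν) (convexHull_latticeEmbed_subset_preimage hTν)

/-- Gap in the discrete diagram: if the lattice widths of `P, Q` in a primitive direction `u`
are `w₁, w₂` (not both zero) with `d = gcd(w₁,w₂)`, then either `V(P,Q) = 0` or
`V(P,Q) ≥ min{d, w₁/d, w₂/d}`. -/
theorem mixedArea_gap (P Q : Set (ℝ × ℝ))
    (hP : IsLatticePolytope P) (hQ : IsLatticePolytope Q)
    (u : ℤ × ℤ) (hu : Int.gcd u.1 u.2 = 1)
    (w₁ w₂ : ℕ) (hw₁ : latticeWidth u P = (w₁ : ℝ)) (hw₂ : latticeWidth u Q = (w₂ : ℝ))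
    (hne : ¬(w₁ = 0 ∧ w₂ = 0)) :
    mixedArea P Q = 0 ∨
      min ((Nat.gcd w₁ w₂ : ℝ))
        (min ((w₁ : ℝ) / (Nat.gcd w₁ w₂ : ℝ)) ((w₂ : ℝ) / (Nat.gcd w₁ w₂ : ℝ)))
        ≤ mixedArea P Q :=
  mixedArea_gap_general P Q hP hQ u hu w₁ w₂ hw₁ hw₂
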